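/- If a formula A (in the grammar ⊤, ⊥, atom, →, ∧, ∀, without free-variable side conditions violated) admits no rewriting step from the rules A∧(B∧C) ↦ (A∧B)∧C, A∧⊤ ↦ A, ⊤∧A ↦ A, (A∧B)→C ↦ A→(B→C), ⊤→A ↦ A, A→(B∧C) ↦ (A→B)∧(A→C), A→⊤ ↦ ⊤, ∀x(A∧B) ↦ ∀x A ∧ ∀x B, ∀x⊤ ↦ ⊤, A→∀x B ↦ ∀x(A→B), then A is in canonical form, i.e. A is generated by the grammar: R ::= atom | ⊥; A ::= R | Q→A; Q ::= A | ∀x Q; B ::= Q | B∧Q; C ::= B | ⊤. -/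

import Mathlib

/-- First-order formulas: ⊤, ⊥, non-constant atoms `X t⃗` (atoms applied to
de Bruijn term-variable indices), implication, conjunction and universal
quantification (de Bruijn style: `all A` binds index 0). -/
inductive Formula : Type where
  | top : Formula
  | bot : Formula
  | atom : ℕ → List ℕ → Formula
  | arr : Formula → Formula → Formula
  | and : Formula → Formula → Formula
  | all : Formula → Formula

/-- The measure φ on formulas. -/
def phi : Formula → ℕ
  | .top => 2
  | .bot => 2
  | .atom _ _ => 2
  | .and A B => 2 * (phi A + 1) * phi B
  | .arr A B => phi B ^ phi A
  | .all A => phi A ^ 2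

/-- The measure ψ on formulas. -/
def psi : Formula → ℕ
  | .top => 2
  | .bot => 2
  | .atom _ _ => 2
  | .and A B => 2 * (psi A + 1) * psi B
  | .arr A B => psi B ^ psi A
  | .all A => 2 * psi A

/-- Shift the free de Bruijn term-variable indices ≥ c up by one. -/
def Formula.shiftFrom : ℕ → Formula → Formula
  | _, .top => .top
  | _, .bot => .bot
  | c, .atom X args => .atom X (args.map fun n => if n < c then n else n + 1)
  | c, .arr A B => .arr (A.shiftFrom c) (B.shiftFrom c)
  | c, .and A B => .and (A.shiftFrom c) (B.shiftFrom c)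
  | c, .all A => .all (A.shiftFrom (c + 1))

/-- `A.shift` is A regarded under one more binder ("x not free in A"). -/
def Formula.shift (A : Formula) : Formula := A.shiftFrom 0

/-- One-step rewriting: the ten oriented isomorphism equations, closed under
formula contexts.  (De Bruijn style: the side condition "x not free in A" of
the last rule is realized by shifting A under the binder.) -/
inductive Rw : Formula → Formula → Prop where
  | andAssoc (A B C) : Rw (.and A (.and B C)) (.and (.and A B) C)
  | andTopR (A) : Rw (.and A .top) A
  | andTopL (A) : Rw (.and .top A) A
  | curry (A B C) : Rw (.arr (.and A B) C) (.arr A (.arr B C))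
  | topArr (A) : Rw (.arr .top A) A
  | distrib (A B C) : Rw (.arr A (.and B C)) (.and (.arr A B) (.arr A C))
  | arrTop (A) : Rw (.arr A .top) .top
  | allAnd (A B) : Rw (.all (.and A B)) (.and (.all A) (.all B))
  | allTop : Rw (.all .top) .top
  | arrAll (A B) : Rw (.arr A (.all B)) (.all (.arr A.shift B))
  | arrL {A A'} (B) : Rw A A' → Rw (.arr A B) (.arr A' B)
  | arrR (A) {B B'} : Rw B B' → Rw (.arr A B) (.arr A B')
  | andL {A A'} (B) : Rw A A' → Rw (.and A B) (.and A' B)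
  | andR (A) {B B'} : Rw B B' → Rw (.and A B) (.and A B')
  | allC {A A'} : Rw A A' → Rw (.all A) (.all A')

/-- Canonical atoms: R ::= atom | ⊥. -/
inductive IsR : Formula → Prop where
  | atom (X ts) : IsR (.atom X ts)
  | bot : IsR .bot

mutual
/-- Canonical →-forms: A ::= R | Q→A. -/
inductive IsA : Formula → Prop where
  | ofR {A} : IsR A → IsA A
  | arr {Q A} : IsQ Q → IsA A → IsA (.arr Q A)

/-- Canonical ∀-forms: Q ::= A | ∀x Q. -/
inductive IsQ : Formula → Prop where
  | ofA {A} : IsA A → IsQ A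
  | all {A} : IsQ A → IsQ (.all A)
end

/-- Canonical conjunctions: B ::= Q | B∧Q. -/
inductive IsB : Formula → Prop where
  | ofQ {A} : IsQ A → IsB A
  | and {B Q} : IsB B → IsQ Q → IsB (.and B Q)

/-- Canonical forms: C ::= B | ⊤. -/
inductive IsC : Formula → Prop where
  | ofB {A} : IsB A → IsC A
  | top : IsC .top


/-!
Induction on the formula. Immediate subformulas of a normal form are normal, hence canonical,
and at each connective the rules that do not fire exclude exactly the canonical shapes that
would leave the grammar: e.g. in `A → B` the premise is neither `⊤` nor a conjunction
(`⊤→A`, currying) and the conclusion neither `⊤`, a conjunction nor a `∀`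
(`A→⊤`, distributivity, `A→∀x B`).
-/

namespace Formula

def IsNormal (A : Formula) : Prop := ∀ B, ¬ Rw A B

variable {A B : Formula}

lemma IsNormal.arr_left (h : IsNormal (.arr A B)) : IsNormal A :=
  fun _ hA => h _ (.arrL B hA)

lemma IsNormal.arr_right (h : IsNormal (.arr A B)) : IsNormal B :=
  fun _ hB => h _ (.arrR A hB)

lemma IsNormal.and_left (h : IsNormal (.and A B)) : IsNormal A :=
  fun _ hA => h _ (.andL B hA)

lemma IsNormal.and_right (h : IsNormal (.and A B)) : IsNormal B :=
  fun _ hB => h _ (.andR A hB)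

lemma IsNormal.all_body (h : IsNormal (.all A)) : IsNormal A :=
  fun _ hA => h _ (.allC hA)

end Formula

open Formula

variable {A B : Formula}

lemma IsA.isC (h : IsA A) : IsC A := .ofB (.ofQ (.ofA h))

lemma IsQ.isC (h : IsQ A) : IsC A := .ofB (.ofQ h)

lemma IsC.isB (h : IsC A) (hA : A ≠ .top) : IsB A := by
  cases h with
  | ofB h => exact h
  | top => exact absurd rfl hA

lemma IsB.isQ (h : IsB A) (hA : ∀ X Y, A ≠ .and X Y) : IsQ A := by
  cases h with
  | ofQ h => exact h
  | and _ _ => exact absurd rfl (hA _ _)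

lemma IsQ.isA (h : IsQ A) (hA : ∀ X, A ≠ .all X) : IsA A := by
  cases h with
  | ofA h => exact h
  | all _ => exact absurd rfl (hA _)

lemma IsC.arr (hN : IsNormal (.arr A B)) (hA : IsC A) (hB : IsC B) : IsC (.arr A B) := by
  have hQ : IsQ A := by
    refine (hA.isB ?_).isQ ?_
    · rintro rfl; exact hN _ (.topArr B)
    · rintro X Y rfl; exact hN _ (.curry X Y B)
  have hBA : IsA B := by
    refine ((hB.isB ?_).isQ ?_).isA ?_
    · rintro rfl; exact hN _ (.arrTop A)
    · rintro X Y rfl; exact hN _ (.distrib A X Y)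
    · rintro X rfl; exact hN _ (.arrAll A X)
  exact (IsA.arr hQ hBA).isC

lemma IsC.and (hN : IsNormal (.and A B)) (hA : IsC A) (hB : IsC B) : IsC (.and A B) := by
  have hAB : IsB A := hA.isB (by rintro rfl; exact hN _ (.andTopL B))
  have hQ : IsQ B := by
    refine (hB.isB ?_).isQ ?_
    · rintro rfl; exact hN _ (.andTopR A)
    · rintro X Y rfl; exact hN _ (.andAssoc A X Y)
  exact .ofB (.and hAB hQ)

lemma IsC.all (hN : IsNormal (.all A)) (hA : IsC A) : IsC (.all A) := by
  have hQ : IsQ A := by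
    refine (hA.isB ?_).isQ ?_
    · rintro rfl; exact hN _ .allTop
    · rintro X Y rfl; exact hN _ (.allAnd X Y)
  exact (IsQ.all hQ).isC

/-- Every normal form of the rewriting system is in canonical form. -/
theorem normal_form_is_canonical :
    ∀ A : Formula, (∀ B : Formula, ¬ Rw A B) → IsC A := by
  intro A
  induction A with
  | top => exact fun _ => .top
  | bot => exact fun _ => (IsA.ofR .bot).isC
  | atom X ts => exact fun _ => (IsA.ofR (.atom X ts)).isC
  | arr A B ihA ihB =>
    exact fun h => .arr h (ihA (IsNormal.arr_left h)) (ihB (IsNormal.arr_right h))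
  | and A B ihA ihB =>
    exact fun h => .and h (ihA (IsNormal.and_left h)) (ihB (IsNormal.and_right h))
  | all A ihA => exact fun h => .all h (ihA (IsNormal.all_body h))
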